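/- arXiv:2111.01128 — 4 statements merged into one kernel-verified Lean document; each statement's English description precedes it below -/
import Mathlib

section
/- For $a, b > 0$ with $a \ne b$ and $v \in [0,1]$ with $v \ne 1/2$, one has $\frac{a-b}{\log a - \log b} \le \frac{\left((1-v)a+vb\right) - \left(va+(1-v)b\right)}{\log\left((1-v)a+vb\right) - \log\left(va+(1-v)b\right)} \le \frac{a+b}{2}$. -/
/-!
Write `x = s (1 + t)`, `y = s (1 - t)` with `s = (x + y) / 2`. Then the logarithmic mean is
`L(x, y) = 2 s / ψ(t)` where `ψ(t) = (log (1 + t) - log (1 - t)) / t = ∑ 2 t^(2k) / (2k + 1)`.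
This series has nonnegative coefficients and constant term `2`, so `ψ ≥ 2` and `ψ` grows with `t²`.
The pair `A_v(a, b), A_{1-v}(a, b)` has the same sum as `a, b` and parameter `(1 - 2v) t`,
whose square is at most `t²`.
-/

open Real

noncomputable def logMean (x y : ℝ) : ℝ := (x - y) / (log x - log y)

lemma hasSum_log_sub_log_div {t : ℝ} (ht : |t| < 1) (ht0 : t ≠ 0) :
    HasSum (fun k : ℕ => 2 * (1 / (2 * k + 1)) * (t ^ 2) ^ k)
      ((log (1 + t) - log (1 - t)) / t) := by
  refine ((hasSum_log_sub_log_of_abs_lt_one ht).div_const t).congr_fun fun k => ?_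
  rw [← pow_mul, pow_succ, mul_div_assoc, mul_div_cancel_right₀ _ ht0]

lemma two_le_log_sub_log_div {t : ℝ} (ht : |t| < 1) (ht0 : t ≠ 0) :
    2 ≤ (log (1 + t) - log (1 - t)) / t := by
  have := le_hasSum (hasSum_log_sub_log_div ht ht0) 0 fun k _ => by positivity
  simpa using this

lemma log_sub_log_div_le_of_sq_le {s t : ℝ} (hs0 : s ≠ 0) (ht : |t| < 1) (ht0 : t ≠ 0)
    (hst : s ^ 2 ≤ t ^ 2) :
    (log (1 + s) - log (1 - s)) / s ≤ (log (1 + t) - log (1 - t)) / t := by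
  have hs : |s| < 1 := (sq_le_sq.mp hst).trans_lt ht
  refine hasSum_le (fun k => ?_) (hasSum_log_sub_log_div hs hs0) (hasSum_log_sub_log_div ht ht0)
  gcongr

lemma logMean_eq_div {x y : ℝ} (hx : 0 < x) (hy : 0 < y) :
    logMean x y = (x + y) / ((log (1 + (x - y) / (x + y)) - log (1 - (x - y) / (x + y))) /
      ((x - y) / (x + y))) := by
  have hxy : 0 < x + y := by positivity
  have hlog : log (1 + (x - y) / (x + y)) - log (1 - (x - y) / (x + y)) = log x - log y := by
    rw [show 1 + (x - y) / (x + y) = 2 / (x + y) * x by field_simp; ring,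
      show 1 - (x - y) / (x + y) = 2 / (x + y) * y by field_simp; ring,
      log_mul (by positivity) hx.ne', log_mul (by positivity) hy.ne']
    ring
  rw [logMean, hlog, div_div_eq_mul_div, mul_div_cancel₀ _ hxy.ne']

theorem stmt11 (a b v : ℝ) (ha : 0 < a) (hb : 0 < b) (hab : a ≠ b)
    (hv0 : 0 ≤ v) (hv1 : v ≤ 1) (hv : v ≠ 1 / 2) :
    (a - b) / (Real.log a - Real.log b) ≤
      (((1 - v) * a + v * b) - (v * a + (1 - v) * b)) /
        (Real.log ((1 - v) * a + v * b) - Real.log (v * a + (1 - v) * b)) ∧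
    (((1 - v) * a + v * b) - (v * a + (1 - v) * b)) /
        (Real.log ((1 - v) * a + v * b) - Real.log (v * a + (1 - v) * b)) ≤ (a + b) / 2 := by
  change logMean a b ≤ logMean _ _ ∧ logMean _ _ ≤ _
  have hsum : ((1 - v) * a + v * b) + (v * a + (1 - v) * b) = a + b := by ring
  have hdiff : ((1 - v) * a + v * b) - (v * a + (1 - v) * b) = (1 - 2 * v) * (a - b) := by ring
  have hab0 : 0 < a + b := by positivity
  have hA : 0 < (1 - v) * a + v * b := by
    nlinarith [mul_nonneg (sub_nonneg.2 hv1) (sq_nonneg a), mul_nonneg hv0 (sq_nonneg b),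
      mul_pos ha hb]
  have hB : 0 < v * a + (1 - v) * b := by
    nlinarith [mul_nonneg hv0 (sq_nonneg a), mul_nonneg (sub_nonneg.2 hv1) (sq_nonneg b),
      mul_pos ha hb]
  rw [logMean_eq_div ha hb, logMean_eq_div hA hB, hsum, hdiff, mul_div_assoc]
  set t := (a - b) / (a + b)
  have ht0 : t ≠ 0 := div_ne_zero (sub_ne_zero.mpr hab) hab0.ne'
  have ht : |t| < 1 := by
    rw [abs_div, abs_of_pos hab0, div_lt_one hab0, abs_lt]
    constructor <;> linarith
  have hu0 : (1 - 2 * v) * t ≠ 0 := mul_ne_zero (by contrapose! hv; linarith) ht0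
  have hut : ((1 - 2 * v) * t) ^ 2 ≤ t ^ 2 := by
    rw [mul_pow]
    exact mul_le_of_le_one_left (sq_nonneg t) (by nlinarith)
  have hu2 := two_le_log_sub_log_div ((sq_le_sq.mp hut).trans_lt ht) hu0
  constructor
  · exact div_le_div_of_nonneg_left hab0.le (by linarith)
      (log_sub_log_div_le_of_sq_le hu0 ht ht0 hut)
  · exact div_le_div_of_nonneg_left hab0.le two_pos hu2
end

section
/- For $a, b > 0$ with $a \ne b$ and $v \in [0,1]$ with $v \ne 1/2$, one has $\sqrt{ab} \le \frac{a^{1-v}b^v - a^v b^{1-v}}{\log(a^{1-v}b^v) - \log(a^v b^{1-v})} \le \frac{a-b}{\log a - \log b}$. -/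
/-!
Write `a = exp (m + u)` and `b = exp (m - u)` with `m = (log a + log b) / 2`. Then
`(a - b) / (log a - log b) = √(ab) · sinh u / u`. The pair `x = G_v(a,b)`, `y = G_{1-v}(a,b)` has
`xy = ab` and `log x - log y = (1 - 2v)(log a - log b)`, so the same identity holds for it with `u`
replaced by `(1 - 2v) u`. Both inequalities therefore follow
from `sinh u / u ≥ 1` and from `sinh u / u` being increasing in `|u|`, a secant-slope property of
the convex function `sinh` on `[0, ∞)`.
-/

open Real Set

namespace Real

lemma convexOn_sinh_Ici : ConvexOn ℝ (Ici 0) sinh := by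
  refine MonotoneOn.convexOn_of_deriv (convex_Ici 0) continuous_sinh.continuousOn
    differentiable_sinh.differentiableOn ?_
  rw [deriv_sinh, interior_Ici]
  intro x hx y hy hxy
  rw [cosh_le_cosh, abs_of_pos hx, abs_of_pos hy]
  exact hxy

lemma sinh_abs_div_abs (u : ℝ) : sinh |u| / |u| = sinh u / u := by
  rcases le_total 0 u with h | h
  · rw [abs_of_nonneg h]
  · rw [abs_of_nonpos h, sinh_neg, neg_div_neg_eq]

lemma sinh_div_self_le_of_abs_le {u w : ℝ} (hu : u ≠ 0) (huw : |u| ≤ |w|) :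
    sinh u / u ≤ sinh w / w := by
  have hw : w ≠ 0 := abs_pos.mp ((abs_pos.mpr hu).trans_le huw)
  have key := convexOn_sinh_Ici.secant_mono (self_mem_Ici) (abs_nonneg u) (abs_nonneg w)
    (abs_ne_zero.mpr hu) (abs_ne_zero.mpr hw) huw
  simpa only [sinh_zero, sub_zero, sinh_abs_div_abs] using key

lemma one_le_sinh_div_self {u : ℝ} (hu : u ≠ 0) : 1 ≤ sinh u / u := by
  rcases hu.lt_or_gt with h | h
  · rw [le_div_iff_of_neg h, one_mul]
    exact (sinh_lt_self_iff.mpr h).le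
  · rw [le_div_iff₀ h, one_mul]
    exact (self_lt_sinh_iff.mpr h).le

lemma sub_div_log_sub_log_eq {x y : ℝ} (hx : 0 < x) (hy : 0 < y) :
    (x - y) / (log x - log y) =
      √(x * y) * (sinh ((log x - log y) / 2) / ((log x - log y) / 2)) := by
  set m := (log x + log y) / 2
  set u := (log x - log y) / 2
  have hx' : x = exp m * exp u := by
    rw [← exp_add, show m + u = log x by ring, exp_log hx]
  have hy' : y = exp m * exp (-u) := by
    rw [← exp_add, show m + -u = log y by ring, exp_log hy]
  have hxy : x * y = exp m ^ 2 := by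
    rw [hx', hy', exp_neg]
    field_simp
  rw [hxy, sqrt_sq (exp_pos m).le, show log x - log y = 2 * u by ring, sinh_eq, hx', hy']
  field_simp

lemma rpow_one_sub_mul_rpow_mul_rpow_mul_rpow_one_sub {a b : ℝ} (ha : 0 < a) (hb : 0 < b)
    (v : ℝ) : a ^ (1 - v) * b ^ v * (a ^ v * b ^ (1 - v)) = a * b := by
  calc a ^ (1 - v) * b ^ v * (a ^ v * b ^ (1 - v))
      = a ^ (1 - v) * a ^ v * (b ^ v * b ^ (1 - v)) := by ring
    _ = a * b := by rw [← rpow_add ha, ← rpow_add hb]; norm_num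

lemma log_rpow_mul_rpow {a b : ℝ} (ha : 0 < a) (hb : 0 < b) (v w : ℝ) :
    log (a ^ v * b ^ w) = v * log a + w * log b := by
  rw [log_mul (by positivity) (by positivity), log_rpow ha, log_rpow hb]

end Real

theorem stmt13 (a b v : ℝ) (ha : 0 < a) (hb : 0 < b) (hab : a ≠ b)
    (hv0 : 0 ≤ v) (hv1 : v ≤ 1) (hv : v ≠ 1 / 2) :
    Real.sqrt (a * b) ≤
      (a ^ (1 - v) * b ^ v - a ^ v * b ^ (1 - v)) /
        (Real.log (a ^ (1 - v) * b ^ v) - Real.log (a ^ v * b ^ (1 - v))) ∧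
    (a ^ (1 - v) * b ^ v - a ^ v * b ^ (1 - v)) /
        (Real.log (a ^ (1 - v) * b ^ v) - Real.log (a ^ v * b ^ (1 - v))) ≤
      (a - b) / (Real.log a - Real.log b) := by
  have hlog : log (a ^ (1 - v) * b ^ v) - log (a ^ v * b ^ (1 - v)) =
      (1 - 2 * v) * (log a - log b) := by
    rw [log_rpow_mul_rpow ha hb, log_rpow_mul_rpow ha hb]
    ring
  rw [sub_div_log_sub_log_eq (by positivity) (by positivity), sub_div_log_sub_log_eq ha hb,
    rpow_one_sub_mul_rpow_mul_rpow_mul_rpow_one_sub ha hb, hlog]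
  have ht : log a - log b ≠ 0 := sub_ne_zero.mpr ((log_injOn_pos.ne_iff ha hb).mpr hab)
  have hc : 1 - 2 * v ≠ 0 := by contrapose! hv; linarith
  have hu : (1 - 2 * v) * (log a - log b) / 2 ≠ 0 := div_ne_zero (mul_ne_zero hc ht) two_ne_zero
  constructor
  · exact le_mul_of_one_le_right (sqrt_nonneg _) (one_le_sinh_div_self hu)
  · refine mul_le_mul_of_nonneg_left (sinh_div_self_le_of_abs_le hu ?_) (sqrt_nonneg _)
    rw [mul_div_assoc, abs_mul]
    exact mul_le_of_le_one_left (abs_nonneg _) (abs_le.mpr ⟨by linarith, by linarith⟩)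
end

section
/- For $t > 0$, $t \ne 1$, and $v \in (0,1)$, one has $L_v(t) L_{1-v}(t) \le \left(\frac{t-1}{\log t}\right)^2$, where $L_v(t) = \frac{1}{\log t}\left(\frac{1-v}{v}(t - t^{1-v}) + \frac{v}{1-v}(t^{1-v} - 1)\right)$. -/
/-!
Write `x = t ^ v`, `y = t ^ (1 - v)`, so that `x * y = t`. After clearing denominators, `(t - 1) ^ 2`
minus the product of the two brackets equals
`(1 - 2v) (v² x (y - 1)² - (1 - v)² y (x - 1)²) / (v² (1 - v)²)`.
Since `(t ^ p - 1) ^ 2 = 4 t ^ p sinh (p log t / 2) ^ 2`, the sign of this is that of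
`(1 - 2v) (f (1 - v) - f v)` with `f p = sinh (p log t / 2) ^ 2 / p ^ 2`, and `f` is monotone on
`p > 0` because `sinh` is convex on `[0, ∞)` and vanishes at `0`.
-/

open Real Set

lemma Real.convexOn_sinh_Ici_s14 : ConvexOn ℝ (Ici 0) sinh := by
  refine MonotoneOn.convexOn_of_deriv (convex_Ici 0) continuous_sinh.continuousOn
    differentiable_sinh.differentiableOn ?_
  rw [deriv_sinh, interior_Ici]
  exact cosh_strictMonoOn.monotoneOn.mono Ioi_subset_Ici_self

lemma Real.sinh_mul_div_le_sinh_mul_div {p q u : ℝ} (hp : 0 < p) (hpq : p ≤ q) (hu : 0 ≤ u) :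
    sinh (p * u) / p ≤ sinh (q * u) / q := by
  rcases hu.eq_or_lt with rfl | hu
  · simp
  have hq := hp.trans_le hpq
  have h := convexOn_sinh_Ici_s14.secant_mono (a := 0) self_mem_Ici (mem_Ici.2 (by positivity))
    (mem_Ici.2 (by positivity)) (by positivity) (by positivity) (mul_le_mul_of_nonneg_right hpq hu.le)
  simp only [sinh_zero, sub_zero] at h
  rw [← div_div, ← div_div] at h
  exact (div_le_div_iff_of_pos_right hu).1 h

lemma Real.monotoneOn_sq_sinh_mul_div_sq (u : ℝ) :
    MonotoneOn (fun p => sinh (p * u) ^ 2 / p ^ 2) (Ioi 0) := by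
  intro p hp q _ hpq
  have habs : ∀ r, 0 < r → sinh (r * u) ^ 2 / r ^ 2 = (sinh (r * |u|) / r) ^ 2 := fun r hr => by
    rw [div_pow, ← sq_abs, abs_sinh, abs_mul, abs_of_pos hr]
  simp only [habs p hp, habs q (lt_of_lt_of_le hp hpq)]
  exact pow_le_pow_left₀ (div_nonneg (sinh_nonneg_iff.2 (mul_nonneg (le_of_lt hp) (abs_nonneg u))) (le_of_lt hp))
    (sinh_mul_div_le_sinh_mul_div hp hpq (abs_nonneg u)) 2

lemma Real.rpow_sub_one_sq {t : ℝ} (ht : 0 < t) (p : ℝ) :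
    (t ^ p - 1) ^ 2 = 4 * t ^ p * sinh (p * (log t / 2)) ^ 2 := by
  rw [rpow_def_of_pos ht, sinh_eq]
  have h : exp (log t * p) = exp (p * (log t / 2)) ^ 2 := by rw [← exp_nat_mul]; ring_nf
  rw [h, exp_neg]
  field_simp
  ring

lemma mul_le_sub_one_sq {t v : ℝ} (ht : 0 < t) (hv0 : 0 < v) (hv1 : v < 1) :
    ((1 - v) / v * (t - t ^ (1 - v)) + v / (1 - v) * (t ^ (1 - v) - 1)) *
      (v / (1 - v) * (t - t ^ v) + (1 - v) / v * (t ^ v - 1)) ≤ (t - 1) ^ 2 := by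
  have hv1' : 0 < 1 - v := sub_pos.2 hv1
  have hxy : t ^ v * t ^ (1 - v) = t := by rw [← rpow_add ht, add_sub_cancel, rpow_one]
  have hx := rpow_sub_one_sq ht v
  have hy := rpow_sub_one_sq ht (1 - v)
  have hsign : 0 ≤ (sinh ((1 - v) * (log t / 2)) ^ 2 / (1 - v) ^ 2
      - sinh (v * (log t / 2)) ^ 2 / v ^ 2) * ((1 - v) - v) :=
    ((monotoneOn_sq_sinh_mul_div_sq (log t / 2)).monovaryOn monotoneOn_id).sub_mul_sub_nonneg
      (mem_Ioi.2 hv0) (mem_Ioi.2 hv1')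
  set x := t ^ v
  set y := t ^ (1 - v)
  set r := sinh ((1 - v) * (log t / 2))
  set s := sinh (v * (log t / 2))
  rw [← hxy]
  calc _ = (x * y - 1) ^ 2 - (1 - 2 * v) * (v ^ 2 * x * (y - 1) ^ 2 - (1 - v) ^ 2 * y * (x - 1) ^ 2)
        / (v ^ 2 * (1 - v) ^ 2) := by field_simp; ring
    _ = (x * y - 1) ^ 2 - 4 * x * y * ((r ^ 2 / (1 - v) ^ 2 - s ^ 2 / v ^ 2) * ((1 - v) - v)) := by
        rw [hx, hy]; field_simp; ring
    _ ≤ (x * y - 1) ^ 2 := sub_le_self _ (by positivity)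

theorem stmt14_general (t v : ℝ) (ht : 0 < t) (hv0 : 0 < v) (hv1 : v < 1) :
    ((1 / Real.log t) * ((1 - v) / v * (t - t ^ (1 - v)) + v / (1 - v) * (t ^ (1 - v) - 1))) *
      ((1 / Real.log t) * (v / (1 - v) * (t - t ^ v) + (1 - v) / v * (t ^ v - 1)))
      ≤ ((t - 1) / Real.log t) ^ 2 := by
  rw [mul_mul_mul_comm, ← sq, one_div_pow, one_div_mul_eq_div, div_pow]
  gcongr
  exact mul_le_sub_one_sq ht hv0 hv1

theorem stmt14 (t v : ℝ) (ht : 0 < t) (ht1 : t ≠ 1) (hv0 : 0 < v) (hv1 : v < 1) :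
    ((1 / Real.log t) * ((1 - v) / v * (t - t ^ (1 - v)) + v / (1 - v) * (t ^ (1 - v) - 1))) *
      ((1 / Real.log t) * (v / (1 - v) * (t - t ^ v) + (1 - v) / v * (t ^ v - 1)))
      ≤ ((t - 1) / Real.log t) ^ 2 :=
  stmt14_general t v ht hv0 hv1
end

section
/- Let $a \ge b > 0$ with $a \ne b$ and $v \in [0, 1/2]$. Then $\frac{a-b}{\log a - \log b} \le \frac{1}{2}\left((1-v)a + vb\right) + \frac{1}{2} a^{1-v}b^v$. -/
/-!
Substituting `a = p²`, `b = q²` gives `L(a, b) = (p + q) / 2 · L(p, q)`, and the logarithmic mean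
is at most the arithmetic mean, so `L(a, b) ≤ ((p + q) / 2)² = (A(a, b) + G(a, b)) / 2`.
When `a ≥ b` and `v ≤ 1/2`, moving weight towards the larger argument only increases both
`A_v` and `G_v`, so `A ≤ A_v` and `G ≤ G_v`.
-/

open Real

theorem two_mul_div_add_two_le_log_one_add {a : ℝ} (ha : 0 ≤ a) :
    2 * a / (a + 2) ≤ log (1 + a) := by
  have h := le_hasSum (hasSum_log_one_add ha) 0 fun k _ => by positivity
  simpa [mul_div_assoc] using h

theorem two_mul_sub_div_add_le_log_sub_log {x y : ℝ} (hy : 0 < y) (hyx : y ≤ x) :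
    2 * (x - y) / (x + y) ≤ log x - log y := by
  have h := two_mul_div_add_two_le_log_one_add (a := x / y - 1) (by
    rw [sub_nonneg, one_le_div hy]; exact hyx)
  rw [add_sub_cancel, log_div (by linarith) hy.ne'] at h
  convert h using 1
  field_simp
  ring

theorem div_log_sub_log_le_half_add {x y : ℝ} (hy : 0 < y) (hyx : y < x) :
    (x - y) / (log x - log y) ≤ (x + y) / 2 := by
  have hlog : 0 < log x - log y := sub_pos.2 (log_lt_log hy hyx)
  have h := two_mul_sub_div_add_le_log_sub_log hy hyx.le
  rw [div_le_iff₀ (by linarith)] at h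
  rw [div_le_iff₀ hlog]
  linarith

theorem div_log_sub_log_le_sqrt {x y : ℝ} (hy : 0 < y) (hyx : y < x) :
    (x - y) / (log x - log y) ≤ ((x + y) / 2 + √x * √y) / 2 := by
  have hx : 0 < x := hy.trans hyx
  have hsub : x - y = (√x - √y) * (√x + √y) := by
    linear_combination sq_sqrt hy.le - sq_sqrt hx.le
  have hlog : log x - log y = 2 * (log √x - log √y) := by
    rw [log_sqrt hx.le, log_sqrt hy.le]; ring
  calc (x - y) / (log x - log y)
      = (√x + √y) / 2 * ((√x - √y) / (log √x - log √y)) := by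
        rw [hsub, hlog, mul_div_mul_comm]; ring
    _ ≤ (√x + √y) / 2 * ((√x + √y) / 2) :=
        mul_le_mul_of_nonneg_left
          (div_log_sub_log_le_half_add (sqrt_pos.2 hy) (sqrt_lt_sqrt hy.le hyx)) (by positivity)
    _ = ((x + y) / 2 + √x * √y) / 2 := by
        linear_combination (sq_sqrt hx.le + sq_sqrt hy.le) / 4

theorem sqrt_mul_sqrt_le_rpow_mul_rpow {a b v : ℝ} (hb : 0 < b) (hba : b ≤ a)
    (hv : v ≤ 1 / 2) :
    √a * √b ≤ a ^ (1 - v) * b ^ v := by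
  have ha : 0 < a := hb.trans_le hba
  calc √a * √b = a ^ (1 / 2 : ℝ) * (b ^ (1 / 2 - v) * b ^ v) := by
        rw [sqrt_eq_rpow, sqrt_eq_rpow, ← rpow_add hb]; ring_nf
    _ ≤ a ^ (1 / 2 : ℝ) * (a ^ (1 / 2 - v) * b ^ v) := by
        gcongr
    _ = a ^ (1 - v) * b ^ v := by
        rw [← mul_assoc, ← rpow_add ha]; ring_nf

theorem stmt16_general (a b v : ℝ) (hb : 0 < b) (hba : b ≤ a) (hab : a ≠ b)
    (hv1 : v ≤ 1 / 2) :
    (a - b) / (Real.log a - Real.log b) ≤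
      (1 / 2) * ((1 - v) * a + v * b) + (1 / 2) * (a ^ (1 - v) * b ^ v) := by
  have hlog := div_log_sub_log_le_sqrt hb (lt_of_le_of_ne hba hab.symm)
  have harith : (a + b) / 2 ≤ (1 - v) * a + v * b := by
    nlinarith [mul_nonneg (sub_nonneg.2 hv1) (sub_nonneg.2 hba)]
  have hgeom := sqrt_mul_sqrt_le_rpow_mul_rpow hb hba hv1
  linarith

theorem stmt16 (a b v : ℝ) (hb : 0 < b) (hba : b ≤ a) (hab : a ≠ b)
    (hv0 : 0 ≤ v) (hv1 : v ≤ 1 / 2) :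
    (a - b) / (Real.log a - Real.log b) ≤
      (1 / 2) * ((1 - v) * a + v * b) + (1 / 2) * (a ^ (1 - v) * b ^ v) :=
  stmt16_general a b v hb hba hab hv1
end
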